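/- arXiv:2205.01525 — 3 statements merged into one kernel-verified Lean document; each statement's English description precedes it below -/
import Mathlib

section
/- Let E be a real vector space, E' its algebraic dual, X a nonempty set, I : X → ℝ, ψ : X → E, and let x₁,...,xₙ ∈ X and λ₁,...,λₙ ∈ [0,1] with ∑ᵢ λᵢ = 1. Then sup over η ∈ E' of inf over x ∈ X of (I(x) + η(ψ(x) − ∑ᵢ λᵢ ψ(xᵢ))) ≤ max over 1 ≤ i ≤ n of I(xᵢ). -/
open Finset

/-- For any `I : X → ℝ`, `ψ : X → E`, points `x₁,…,xₙ` and convex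
coefficients `λ₁,…,λₙ`, the sup over the algebraic dual of the inf over `X` of
`I(x) + η(ψ(x) − ∑ λᵢ ψ(xᵢ))` is at most `max I(xᵢ)`. -/
theorem stmt0 {E : Type*} [AddCommGroup E] [Module ℝ E] {X : Type*} [Nonempty X]
    (I : X → ℝ) (ψ : X → E) (n : ℕ) (x : Fin (n + 1) → X) (l : Fin (n + 1) → ℝ)
    (hl0 : ∀ i, 0 ≤ l i) (hl1 : ∀ i, l i ≤ 1) (hsum : ∑ i, l i = 1) :
    (⨆ η : Module.Dual ℝ E, ⨅ x' : X,
        ((I x' + η (ψ x' - ∑ i, l i • ψ (x i)) : ℝ) : EReal))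
      ≤ ((univ.sup' ⟨0, mem_univ 0⟩ fun i => I (x i) : ℝ) : EReal) := by
  apply iSup_le
  intro η
  set s : E := ∑ i, l i • ψ (x i) with hs
  set a : Fin (n + 1) → ℝ := fun i => I (x i) + η (ψ (x i) - s) with ha
  have hne : (univ : Finset (Fin (n + 1))).Nonempty := ⟨0, mem_univ 0⟩
  obtain ⟨j, -, hj⟩ := Finset.exists_mem_eq_inf' hne a
  have h1 : (⨅ x' : X, ((I x' + η (ψ x' - s) : ℝ) : EReal))
      ≤ ((univ.inf' hne a : ℝ) : EReal) := by
    rw [hj]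
    exact iInf_le _ (x j)
  refine h1.trans ?_
  rw [EReal.coe_le_coe_iff]
  -- sum of the η part vanishes
  have hzero : ∑ i, l i * η (ψ (x i) - s) = 0 := by
    have : ∑ i, l i * η (ψ (x i) - s) = η (∑ i, l i • (ψ (x i) - s)) := by
      rw [map_sum]
      simp [map_smul, smul_eq_mul]
    rw [this]
    have : ∑ i, l i • (ψ (x i) - s) = s - (∑ i, l i) • s := by
      simp [smul_sub, Finset.sum_sub_distrib, ← Finset.sum_smul, hs]
    rw [this, hsum, one_smul, sub_self, map_zero]
  have hconv : ∑ i, l i * a i = ∑ i, l i * I (x i) := by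
    simp only [ha, mul_add, Finset.sum_add_distrib, hzero, add_zero]
  have hinf : univ.inf' hne a ≤ ∑ i, l i * a i := by
    calc univ.inf' hne a = (∑ i, l i) * univ.inf' hne a := by rw [hsum, one_mul]
    _ = ∑ i, l i * univ.inf' hne a := by rw [Finset.sum_mul]
    _ ≤ ∑ i, l i * a i := by
        apply Finset.sum_le_sum
        intro i _
        exact mul_le_mul_of_nonneg_left (Finset.inf'_le a (mem_univ i)) (hl0 i)
  refine hinf.trans ?_
  rw [hconv]
  calc ∑ i, l i * I (x i) ≤ ∑ i, l i * (univ.sup' hne fun i => I (x i)) := by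
        apply Finset.sum_le_sum
        intro i _
        exact mul_le_mul_of_nonneg_left (Finset.le_sup' (fun i => I (x i)) (mem_univ i)) (hl0 i)
    _ = _ := by rw [← Finset.sum_mul, hsum, one_mul]
end

section
/- Let ω : [0,ρ) → [0,∞) be continuous and increasing with ω(x) = 0 only at x = 0, and let h ∈ L²((0,1)). Then the functional u ↦ ½·ω̃(∫₀¹|u'(t)|²dt) − ∫₀¹ h(t)u(t)dt, where ω̃(ξ) = ∫₀^ξ ω(x)dx, is strictly convex on the open ball of radius √ρ in H¹₀((0,1)), and hence has at most one critical point there. -/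
open Metric Set RealInnerProductSpace

lemma aux_pos (ρ : ℝ) (ω : ℝ → ℝ)
    (hωc : ContinuousOn ω (Ico 0 ρ)) (hωm : MonotoneOn ω (Ico 0 ρ))
    (hωnn : ∀ x ∈ Ico (0 : ℝ) ρ, 0 ≤ ω x)
    (hωz : ∀ x ∈ Ico (0 : ℝ) ρ, ω x = 0 → x = 0)
    {a b : ℝ} (ha : 0 ≤ a) (hab : a < b) (hb : b < ρ) :
    0 < ∫ t in a..b, ω t := by
  have hInt : ∀ ⦃c d : ℝ⦄, 0 ≤ c → c ≤ d → d < ρ → IntervalIntegrable ω MeasureTheory.volume c d := by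
    intro c d hc hcd hd
    refine (hωc.mono ?_).intervalIntegrable
    rw [uIcc_of_le hcd]
    exact fun x hx => ⟨hc.trans hx.1, lt_of_le_of_lt hx.2 hd⟩
  set m := (a + b) / 2 with hm
  have ham : a ≤ m := by simp only [hm]; linarith
  have hmb : m ≤ b := by simp only [hm]; linarith
  have hm0 : 0 < m := by simp only [hm]; linarith
  have hmρ : m < ρ := lt_of_le_of_lt hmb hb
  have hmmem : m ∈ Ico (0 : ℝ) ρ := ⟨hm0.le, hmρ⟩
  have hωmpos : 0 < ω m := by
    rcases lt_or_eq_of_le (hωnn m hmmem) with h | h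
    · exact h
    · exact absurd (hωz m hmmem h.symm) (ne_of_gt hm0)
  have hsplit : (∫ t in a..m, ω t) + (∫ t in m..b, ω t) = ∫ t in a..b, ω t :=
    intervalIntegral.integral_add_adjacent_intervals (hInt ha ham hmρ)
      (hInt hm0.le hmb hb)
  have h1 : 0 ≤ ∫ t in a..m, ω t :=
    intervalIntegral.integral_nonneg ham fun x hx =>
      hωnn x ⟨ha.trans hx.1, lt_of_le_of_lt hx.2 hmρ⟩
  have h2 : (b - m) * ω m ≤ ∫ t in m..b, ω t := by
    have := intervalIntegral.integral_mono_on (f := fun _ => ω m) (g := ω) hmb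
      (intervalIntegrable_const) (hInt hm0.le hmb hb)
      (fun x hx => hωm hmmem ⟨hm0.le.trans hx.1, lt_of_le_of_lt hx.2 hb⟩ hx.1)
    simpa [smul_eq_mul] using this
  have hbm : 0 < b - m := by simp only [hm]; linarith
  nlinarith [mul_pos hbm hωmpos]

lemma aux_convex (ρ : ℝ) (ω : ℝ → ℝ)
    (hωc : ContinuousOn ω (Ico 0 ρ)) (hωm : MonotoneOn ω (Ico 0 ρ))
    {x y a b : ℝ} (hx : 0 ≤ x) (hxy : x ≤ y) (hy : y < ρ)
    (ha : 0 ≤ a) (hb : 0 ≤ b) (hab : a + b = 1) :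
    (∫ t in (0:ℝ)..(a * x + b * y), ω t) ≤
      a * (∫ t in (0:ℝ)..x, ω t) + b * ∫ t in (0:ℝ)..y, ω t := by
  have hInt : ∀ ⦃c d : ℝ⦄, 0 ≤ c → c ≤ d → d < ρ → IntervalIntegrable ω MeasureTheory.volume c d := by
    intro c d hc hcd hd
    refine (hωc.mono ?_).intervalIntegrable
    rw [uIcc_of_le hcd]
    exact fun z hz => ⟨hc.trans hz.1, lt_of_le_of_lt hz.2 hd⟩
  have hxB : x ≤ a * x + b * y := by nlinarith
  have hBy : a * x + b * y ≤ y := by nlinarith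
  have hBρ : a * x + b * y < ρ := lt_of_le_of_lt hBy hy
  have hB0 : (0:ℝ) ≤ a * x + b * y := hx.trans hxB
  have hBmem : a * x + b * y ∈ Ico (0 : ℝ) ρ := ⟨hB0, hBρ⟩
  have h1 : (∫ t in x..(a * x + b * y), ω t) ≤ (a * x + b * y - x) * ω (a * x + b * y) := by
    have := intervalIntegral.integral_mono_on (f := ω) (g := fun _ => ω (a * x + b * y)) hxB
      (hInt hx hxB hBρ) (intervalIntegrable_const)
      (fun z hz => hωm ⟨hx.trans hz.1, lt_of_le_of_lt hz.2 hBρ⟩ hBmem hz.2)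
    simpa [smul_eq_mul] using this
  have h2 : (y - (a * x + b * y)) * ω (a * x + b * y) ≤ ∫ t in (a * x + b * y)..y, ω t := by
    have := intervalIntegral.integral_mono_on (f := fun _ => ω (a * x + b * y)) (g := ω) hBy
      (intervalIntegrable_const) (hInt hB0 hBy hy)
      (fun z hz => hωm hBmem ⟨hB0.trans hz.1, lt_of_le_of_lt hz.2 hy⟩ hz.1)
    simpa [smul_eq_mul] using this
  have e1 : (∫ t in (0:ℝ)..x, ω t) + (∫ t in x..(a * x + b * y), ω t)
      = ∫ t in (0:ℝ)..(a * x + b * y), ω t :=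
    intervalIntegral.integral_add_adjacent_intervals (hInt le_rfl hx (lt_of_le_of_lt hxy hy))
      (hInt hx hxB hBρ)
  have e2 : (∫ t in (0:ℝ)..(a * x + b * y), ω t) + (∫ t in (a * x + b * y)..y, ω t)
      = ∫ t in (0:ℝ)..y, ω t :=
    intervalIntegral.integral_add_adjacent_intervals (hInt le_rfl hB0 hBρ) (hInt hB0 hBy hy)
  have key : a * (∫ t in x..(a * x + b * y), ω t) ≤ b * ∫ t in (a * x + b * y)..y, ω t := by
    calc a * (∫ t in x..(a * x + b * y), ω t)
        ≤ a * ((a * x + b * y - x) * ω (a * x + b * y)) := mul_le_mul_of_nonneg_left h1 ha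
      _ = b * ((y - (a * x + b * y)) * ω (a * x + b * y)) := by
          rw [show b = 1 - a from by linarith]; ring
      _ ≤ b * ∫ t in (a * x + b * y)..y, ω t := mul_le_mul_of_nonneg_left h2 hb
  have p1 : b * (∫ t in (0:ℝ)..y, ω t)
      = b * (∫ t in (0:ℝ)..(a * x + b * y), ω t) + b * ∫ t in (a * x + b * y)..y, ω t := by
    rw [← e2]; ring
  have p2 : a * (∫ t in (0:ℝ)..x, ω t)
      = a * (∫ t in (0:ℝ)..(a * x + b * y), ω t) - a * ∫ t in x..(a * x + b * y), ω t := by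
    rw [← e1]; ring
  have p3 : a * (∫ t in (0:ℝ)..(a * x + b * y), ω t)
      + b * (∫ t in (0:ℝ)..(a * x + b * y), ω t) = ∫ t in (0:ℝ)..(a * x + b * y), ω t := by
    rw [← add_mul, hab, one_mul]
  linarith [key, p1, p2, p3]

/-- Let `ω : [0,ρ) → [0,∞)` be continuous and increasing,
vanishing only at `0`, and let `L` be a continuous linear functional (in the
motivating case `H = H¹₀((0,1))` with `‖u‖² = ∫₀¹|u'|²` and `L u = ∫₀¹ h u`).
Then `Φ(u) = ½ ω̃(‖u‖²) − L(u)`, with `ω̃(ξ) = ∫₀^ξ ω`, is strictly convex on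
the open ball of radius `√ρ`, and hence has at most one critical point there. -/
theorem stmt11 {H : Type*} [NormedAddCommGroup H] [InnerProductSpace ℝ H]
    (ρ : ℝ) (hρ : 0 < ρ) (ω : ℝ → ℝ)
    (hωc : ContinuousOn ω (Ico 0 ρ)) (hωm : MonotoneOn ω (Ico 0 ρ))
    (hωnn : ∀ x ∈ Ico (0 : ℝ) ρ, 0 ≤ ω x)
    (hωz : ∀ x ∈ Ico (0 : ℝ) ρ, ω x = 0 → x = 0)
    (L : H →L[ℝ] ℝ) (Φ : H → ℝ)
    (hΦ : ∀ u : H, Φ u = (1 / 2) * (∫ x in (0 : ℝ)..(‖u‖ ^ 2), ω x) - L u) :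
    StrictConvexOn ℝ (ball (0 : H) (Real.sqrt ρ)) Φ ∧
    ∀ u ∈ ball (0 : H) (Real.sqrt ρ), ∀ v ∈ ball (0 : H) (Real.sqrt ρ),
      HasFDerivAt Φ (0 : H →L[ℝ] ℝ) u → HasFDerivAt Φ (0 : H →L[ℝ] ℝ) v →
      u = v := by
  have hsq : ∀ w : H, w ∈ ball (0 : H) (Real.sqrt ρ) → ‖w‖ ^ 2 < ρ := by
    intro w hw
    rw [mem_ball, dist_zero_right] at hw
    calc ‖w‖ ^ 2 < (Real.sqrt ρ) ^ 2 := by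
          apply pow_lt_pow_left₀ hw (norm_nonneg _); norm_num
      _ = ρ := Real.sq_sqrt hρ.le
  have hstrict : StrictConvexOn ℝ (ball (0 : H) (Real.sqrt ρ)) Φ := by
    refine ⟨convex_ball _ _, ?_⟩
    intro u hu v hv huv a b ha hb hab
    have hX : ‖u‖ ^ 2 < ρ := hsq u hu
    have hY : ‖v‖ ^ 2 < ρ := hsq v hv
    have hident : a * ‖u‖ ^ 2 + b * ‖v‖ ^ 2 - ‖a • u + b • v‖ ^ 2 = a * b * ‖u - v‖ ^ 2 := by
      rw [← real_inner_self_eq_norm_sq (a • u + b • v), ← real_inner_self_eq_norm_sq u,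
        ← real_inner_self_eq_norm_sq v, ← real_inner_self_eq_norm_sq (u - v)]
      simp only [inner_add_left, inner_add_right, inner_sub_left, inner_sub_right,
        real_inner_smul_left, real_inner_smul_right, real_inner_comm v u]
      rw [show b = 1 - a from by linarith]; ring
    have hABlt : ‖a • u + b • v‖ ^ 2 < a * ‖u‖ ^ 2 + b * ‖v‖ ^ 2 := by
      have huvne : u - v ≠ 0 := sub_ne_zero.mpr huv
      have hp : 0 < ‖u - v‖ ^ 2 := by
        have := norm_pos_iff.mpr huvne
        positivity
      nlinarith [mul_pos (mul_pos ha hb) hp]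
    have hBρ : a * ‖u‖ ^ 2 + b * ‖v‖ ^ 2 < ρ := by nlinarith
    have hA0 : (0:ℝ) ≤ ‖a • u + b • v‖ ^ 2 := by positivity
    have hInt : ∀ ⦃c d : ℝ⦄, 0 ≤ c → c ≤ d → d < ρ →
        IntervalIntegrable ω MeasureTheory.volume c d := by
      intro c d hc hcd hd
      refine (hωc.mono ?_).intervalIntegrable
      rw [uIcc_of_le hcd]
      exact fun z hz => ⟨hc.trans hz.1, lt_of_le_of_lt hz.2 hd⟩
    have hfstep : (∫ t in (0:ℝ)..(‖a • u + b • v‖ ^ 2), ω t)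
        < ∫ t in (0:ℝ)..(a * ‖u‖ ^ 2 + b * ‖v‖ ^ 2), ω t := by
      have hpos := aux_pos ρ ω hωc hωm hωnn hωz hA0 hABlt hBρ
      have e : (∫ t in (0:ℝ)..(‖a • u + b • v‖ ^ 2), ω t)
          + (∫ t in (‖a • u + b • v‖ ^ 2)..(a * ‖u‖ ^ 2 + b * ‖v‖ ^ 2), ω t)
          = ∫ t in (0:ℝ)..(a * ‖u‖ ^ 2 + b * ‖v‖ ^ 2), ω t :=
        intervalIntegral.integral_add_adjacent_intervals
          (hInt le_rfl hA0 (hABlt.trans hBρ)) (hInt hA0 hABlt.le hBρ)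
      linarith
    have hfconv : (∫ t in (0:ℝ)..(a * ‖u‖ ^ 2 + b * ‖v‖ ^ 2), ω t) ≤
        a * (∫ t in (0:ℝ)..(‖u‖ ^ 2), ω t) + b * ∫ t in (0:ℝ)..(‖v‖ ^ 2), ω t := by
      rcases le_total (‖u‖ ^ 2) (‖v‖ ^ 2) with h | h
      · exact aux_convex ρ ω hωc hωm (by positivity) h hY ha.le hb.le hab
      · have h2 := aux_convex ρ ω hωc hωm (by positivity) h hX hb.le ha.le (by linarith)
        have hBB : a * ‖u‖ ^ 2 + b * ‖v‖ ^ 2 = b * ‖v‖ ^ 2 + a * ‖u‖ ^ 2 := by ring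
        rw [hBB]
        linarith
    have hkey : (∫ t in (0:ℝ)..(‖a • u + b • v‖ ^ 2), ω t) <
        a * (∫ t in (0:ℝ)..(‖u‖ ^ 2), ω t) + b * ∫ t in (0:ℝ)..(‖v‖ ^ 2), ω t :=
      lt_of_lt_of_le hfstep hfconv
    have hL : L (a • u + b • v) = a * L u + b * L v := by
      simp [map_add, map_smul, smul_eq_mul]
    rw [hΦ, hΦ, hΦ, hL]
    simp only [smul_eq_mul]
    nlinarith [hkey]
  refine ⟨hstrict, ?_⟩
  intro u hu v hv hdu hdv
  -- each critical point is a minimum on the ball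
  have hmin : ∀ w : H, w ∈ ball (0 : H) (Real.sqrt ρ) → HasFDerivAt Φ (0 : H →L[ℝ] ℝ) w →
      IsMinOn Φ (ball (0 : H) (Real.sqrt ρ)) w := by
    intro w hw hdw
    rw [isMinOn_iff]
    intro z hz
    set ψ : ℝ → ℝ := fun t => Φ (w + t • (z - w)) with hψ
    have hc : HasDerivAt (fun t : ℝ => w + t • (z - w)) (z - w) 0 := by
      simpa using ((hasDerivAt_id (0:ℝ)).smul_const (z - w)).const_add w
    have hψd : HasDerivAt ψ 0 0 := by
      have : HasDerivAt ψ ((0 : H →L[ℝ] ℝ) (z - w)) 0 := by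
        refine HasFDerivAt.comp_hasDerivAt 0 ?_ hc
        simpa using hdw
      simpa using this
    have htend : Filter.Tendsto (slope ψ 0) (nhdsWithin 0 (Ioi 0)) (nhds 0) :=
      (hasDerivAt_iff_tendsto_slope.mp hψd).mono_left
        (nhdsWithin_mono 0 fun t ht => ne_of_gt ht)
    have hev : ∀ᶠ t in nhdsWithin (0:ℝ) (Ioi 0), slope ψ 0 t ≤ Φ z - Φ w := by
      filter_upwards [Ioo_mem_nhdsGT_of_mem (⟨le_refl (0:ℝ), zero_lt_one⟩ : (0:ℝ) ∈ Ico (0:ℝ) 1)]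
        with t ht
      have ht0 : 0 < t := ht.1
      have ht1 : t < 1 := ht.2
      have hcomb : w + t • (z - w) = (1 - t) • w + t • z := by
        rw [sub_smul, smul_sub, one_smul]; abel
      have hconv := hstrict.convexOn.2 hw hz (by linarith : (0:ℝ) ≤ 1 - t) ht0.le
        (by ring)
      rw [← hcomb] at hconv
      have hψt : ψ t ≤ (1 - t) * Φ w + t * Φ z := by simpa [hψ, smul_eq_mul] using hconv
      have hψ0 : ψ 0 = Φ w := by simp [hψ]
      rw [slope_def_field, sub_zero, div_le_iff₀ ht0, hψ0]
      nlinarith [hψt]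
    have := le_of_tendsto htend hev
    linarith
  exact hstrict.eq_of_isMinOn (hmin u hu hdu) (hmin v hv hdv) hu hv
end

section
/- Let H be a real Hilbert space, X a topological space, ψ : X → H weakly continuous with ‖ψ(·)‖ inf-compact, φ : X → ℝ bounded with ‖ψ(·)‖² + φ(·) lower semicontinuous, and y ∈ H. Then for every s ∈ ℝ, the set {x ∈ X : ½‖ψ(x) − u₀‖² + ½φ(x) + ⟨ψ(x), y⟩ ≤ s} is compact, where u₀ ∈ H is fixed. -/
/-!
Expanding the square, the set is the sublevel set `{x | g x ≤ 2 s - ‖u₀‖²}` of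
`g = ‖ψ‖² + φ + 2⟪ψ, y - u₀⟫`, which is lower semicontinuous because `⟪ψ(·), y - u₀⟫` is
continuous. So the set is closed, and by Cauchy–Schwarz and the bound on `φ`,
`‖ψ x‖² - 2‖y - u₀‖‖ψ x‖` is bounded on it; hence `‖ψ x‖` is bounded there and the set is a
closed subset of a compact sublevel set of `‖ψ(·)‖`.
-/

open scoped RealInnerProductSpace

theorem le_add_sqrt_of_sq_sub_two_mul_le {t a c : ℝ} (h : t ^ 2 - 2 * a * t ≤ c) :
    t ≤ a + √(a ^ 2 + c) := by
  have hsq : (t - a) ^ 2 ≤ a ^ 2 + c := by linarith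
  linarith [le_abs_self (t - a), Real.abs_le_sqrt hsq]

theorem LowerSemicontinuous.isCompact_setOf_le {X : Type*} [TopologicalSpace X] {f g : X → ℝ}
    (hg : LowerSemicontinuous g) (hf : ∀ r, IsCompact {x | f x ≤ r})
    (hgf : ∀ c, ∃ r, ∀ x, g x ≤ c → f x ≤ r) (c : ℝ) : IsCompact {x | g x ≤ c} := by
  obtain ⟨r, hr⟩ := hgf c
  exact (hf r).of_isClosed_subset (hg.isClosed_preimage c) hr

section

variable {H : Type*} [NormedAddCommGroup H] [InnerProductSpace ℝ H]
  {X : Type*} {ψ : X → H} {φ : X → ℝ}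

theorem norm_le_of_normSq_add_add_two_inner_le {C : ℝ} (hφ : ∀ x, -C ≤ φ x) (v : H) {c : ℝ}
    {x : X} (hx : ‖ψ x‖ ^ 2 + φ x + 2 * ⟪ψ x, v⟫ ≤ c) :
    ‖ψ x‖ ≤ ‖v‖ + √(‖v‖ ^ 2 + (c + C)) := by
  have hinner : -(‖ψ x‖ * ‖v‖) ≤ ⟪ψ x, v⟫ := neg_le_of_abs_le (abs_real_inner_le_norm _ _)
  apply le_add_sqrt_of_sq_sub_two_mul_le
  linarith [hφ x]

theorem isCompact_setOf_normSq_add_add_two_inner_le [TopologicalSpace X] {C : ℝ}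
    (hφ : ∀ x, -C ≤ φ x) (v : H) (hv : Continuous fun x => ⟪ψ x, v⟫) (hc : ∀ c : ℝ, IsCompact {x : X | ‖ψ x‖ ≤ c})
    (hlsc : LowerSemicontinuous fun x => ‖ψ x‖ ^ 2 + φ x) (c : ℝ) :
    IsCompact {x | ‖ψ x‖ ^ 2 + φ x + 2 * ⟪ψ x, v⟫ ≤ c} :=
  (hlsc.add (continuous_const.mul hv).lowerSemicontinuous).isCompact_setOf_le hc
    (fun _ => ⟨_, fun _ => norm_le_of_normSq_add_add_two_inner_le hφ v⟩) c

end

/-- If `ψ : X → H` is weakly continuous with `‖ψ(·)‖`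
inf-compact, `φ` is bounded with `‖ψ(·)‖² + φ(·)` lower semicontinuous, then
for all `y, u₀ ∈ H` and `s ∈ ℝ` the set
`{x : ½‖ψ(x) − u₀‖² + ½φ(x) + ⟨ψ(x), y⟩ ≤ s}` is compact. -/
theorem stmt19 {H : Type*} [NormedAddCommGroup H] [InnerProductSpace ℝ H]
    {X : Type*} [TopologicalSpace X] (ψ : X → H) (φ : X → ℝ)
    (hw : ∀ v : H, Continuous fun x => (inner ℝ (ψ x) v : ℝ))
    (hc : ∀ c : ℝ, IsCompact {x : X | ‖ψ x‖ ≤ c})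
    (hφb : ∃ C : ℝ, ∀ x : X, |φ x| ≤ C)
    (hlsc : LowerSemicontinuous fun x => ‖ψ x‖ ^ 2 + φ x)
    (y u₀ : H) (s : ℝ) :
    IsCompact {x : X |
      (1 / 2) * ‖ψ x - u₀‖ ^ 2 + (1 / 2) * φ x + (inner ℝ (ψ x) y : ℝ) ≤ s} := by
  obtain ⟨C, hC⟩ := hφb
  convert isCompact_setOf_normSq_add_add_two_inner_le (fun x => neg_le_of_abs_le (hC x))
    (y - u₀) (hw (y - u₀)) hc hlsc (2 * s - ‖u₀‖ ^ 2) using 3 with x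
  rw [norm_sub_sq_real, inner_sub_right]
  constructor <;> intro h <;> linarith
end
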